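/- arXiv:0710.1583 — 4 statements merged into one kernel-verified Lean document; each statement's English description precedes it below -/
import Mathlib

section
/- Let a, b be nonzero real numbers. The set of real numbers t satisfying |a·t² + b·t| ≤ 1 has Lebesgue measure at most C·|a|^{-1/2} for some absolute constant C. (In fact, if b² ≤ 8|a| its length is O(|a|^{-1/2}), and if b² > 8|a| its length is O(|b|^{-1}) = O(|a|^{-1/2}).) -/
/-!
Completing the square, `a t² + b t = a ((t + r)² - r²)` with `r = b / (2a)`, so up to a
translation the sublevel set is `{u | r² - ε ≤ u² ≤ r² + ε}` with `ε = 1/|a|`. That set lies in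
two intervals `±[√(r² - ε), √(r² + ε)]`, each of length at most `√(2ε)`, whatever `r` is.
-/

open MeasureTheory Set

namespace QuadSublevel

lemma sqrt_add_sub_sqrt_sub_le {c ε : ℝ} (hε : 0 ≤ ε) :
    √(c + ε) - √(c - ε) ≤ √(2 * ε) := by
  have hlow : c - ε ≤ √(c - ε) ^ 2 := by
    rcases le_or_gt 0 (c - ε) with h | h
    · rw [Real.sq_sqrt h]
    · exact h.le.trans (sq_nonneg _)
  have hsq : √(2 * ε) ^ 2 = 2 * ε := Real.sq_sqrt (by linarith)
  have hcross : 0 ≤ √(c - ε) * √(2 * ε) := by positivity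
  have hupp : √(c + ε) ≤ √(c - ε) + √(2 * ε) :=
    Real.sqrt_le_iff.mpr ⟨by positivity, by linear_combination hlow + 2 * hcross - hsq⟩
  linarith

lemma setOf_abs_sq_sub_le_subset (c ε : ℝ) :
    {u : ℝ | |u ^ 2 - c| ≤ ε} ⊆
      Icc (-√(c + ε)) (-√(c - ε)) ∪ Icc √(c - ε) √(c + ε) := by
  intro u (hu : |u ^ 2 - c| ≤ ε)
  obtain ⟨hlow, hupp⟩ := abs_le.mp hu
  have habs_le : |u| ≤ √(c + ε) := Real.abs_le_sqrt (by linarith)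
  have hle_abs : √(c - ε) ≤ |u| :=
    Real.sqrt_sq_eq_abs u ▸ Real.sqrt_le_sqrt (by linarith)
  rcases le_or_gt 0 u with hu0 | hu0
  · rw [abs_of_nonneg hu0] at habs_le hle_abs
    exact Or.inr ⟨hle_abs, habs_le⟩
  · rw [abs_of_neg hu0] at habs_le hle_abs
    exact Or.inl ⟨by linarith, by linarith⟩

lemma volume_setOf_abs_sq_sub_le (c : ℝ) {ε : ℝ} (hε : 0 ≤ ε) :
    volume {u : ℝ | |u ^ 2 - c| ≤ ε} ≤ ENNReal.ofReal (2 * √(2 * ε)) := by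
  have hgap := sqrt_add_sub_sqrt_sub_le (c := c) hε
  calc volume {u : ℝ | |u ^ 2 - c| ≤ ε}
      ≤ volume (Icc (-√(c + ε)) (-√(c - ε)) ∪ Icc √(c - ε) √(c + ε)) :=
        measure_mono (setOf_abs_sq_sub_le_subset c ε)
    _ ≤ volume (Icc (-√(c + ε)) (-√(c - ε))) + volume (Icc √(c - ε) √(c + ε)) :=
        measure_union_le _ _
    _ = ENNReal.ofReal (√(c + ε) - √(c - ε)) + ENNReal.ofReal (√(c + ε) - √(c - ε)) := by
        rw [Real.volume_Icc, Real.volume_Icc, neg_sub_neg]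
    _ ≤ ENNReal.ofReal (2 * √(2 * ε)) := by
        rw [← ENNReal.ofReal_add (sub_nonneg.mpr (Real.sqrt_le_sqrt (by linarith)))
          (sub_nonneg.mpr (Real.sqrt_le_sqrt (by linarith)))]
        exact ENNReal.ofReal_le_ofReal (by linarith)

lemma abs_quadratic_le_one_iff {a : ℝ} (ha : a ≠ 0) (b t : ℝ) :
    |a * t ^ 2 + b * t| ≤ 1 ↔ |(t + b / (2 * a)) ^ 2 - (b / (2 * a)) ^ 2| ≤ |a|⁻¹ := by
  have hsquare : a * t ^ 2 + b * t = a * ((t + b / (2 * a)) ^ 2 - (b / (2 * a)) ^ 2) := by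
    field_simp
    ring
  rw [hsquare, abs_mul, ← one_div, le_div_iff₀' (abs_pos.mpr ha)]

lemma volume_setOf_abs_quadratic_le_one {a : ℝ} (ha : a ≠ 0) (b : ℝ) :
    volume {t : ℝ | |a * t ^ 2 + b * t| ≤ 1} ≤ ENNReal.ofReal (2 * √(2 * |a|⁻¹)) := by
  have htranslate : {t : ℝ | |a * t ^ 2 + b * t| ≤ 1} =
      (· + b / (2 * a)) ⁻¹' {u | |u ^ 2 - (b / (2 * a)) ^ 2| ≤ |a|⁻¹} := by
    ext t
    exact abs_quadratic_le_one_iff ha b t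
  rw [htranslate, measure_preimage_add_right]
  exact volume_setOf_abs_sq_sub_le _ (by positivity)

end QuadSublevel

open QuadSublevel in
theorem quad_sublevel_measure :
    ∃ C : ℝ, 0 < C ∧ ∀ a b : ℝ, a ≠ 0 → b ≠ 0 →
      volume {t : ℝ | |a * t ^ 2 + b * t| ≤ 1} ≤
        ENNReal.ofReal (C * |a| ^ (-(1 / 2 : ℝ))) := by
  refine ⟨2 * √2, by positivity, fun a b ha _ => ?_⟩
  have hrpow : |a| ^ (-(1 / 2 : ℝ)) = √(|a|⁻¹) := by
    rw [Real.rpow_neg (abs_nonneg a), ← Real.sqrt_eq_rpow, Real.sqrt_inv]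
  rw [hrpow, mul_assoc, ← Real.sqrt_mul zero_le_two]
  exact volume_setOf_abs_quadratic_le_one ha b
end

section
/- Define h(t0,t1,t5,t6) := max{|t0⁴t5|, |t0⁴t1|, |t1t5²t6² + t0²t1²t6|, |t0²t1t5t6|, |t0²t5²t6 + t0⁴t1|, |t5³t6² + t0²t1t5t6|} for real t0,t1,t5,t6. Then for fixed t0 > 0, t5 ≠ 0, t6 ≠ 0, the function g0(t0,t5,t6) := measure of {t1 ∈ ℝ : h(t0,t1,t5,t6) ≤ 1} satisfies g0(t0,t5,t6) ≤ C / (t0·|t6|^{1/2}) for some absolute constant C. -/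
/-!
The third term of `h` is `|a t1² + b t1|` with `a = t0² t6`, `b = t5² t6²`, so the set in `g0` lies in a
sublevel set of a quadratic. Completing the square, such a set is a translate of `{y | y² ∈ [u, u + 2/|a|]}`,
two intervals of length `√(u + 2/|a|) - √u ≤ √(2/|a|)` each; and `√(2/|a|) = √2 / (t0 √|t6|)`.
-/

open MeasureTheory

noncomputable def h (t0 t1 t5 t6 : ℝ) : ℝ :=
  max (|t0 ^ 4 * t5|) (max (|t0 ^ 4 * t1|)
    (max (|t1 * t5 ^ 2 * t6 ^ 2 + t0 ^ 2 * t1 ^ 2 * t6|)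
      (max (|t0 ^ 2 * t1 * t5 * t6|)
        (max (|t0 ^ 2 * t5 ^ 2 * t6 + t0 ^ 4 * t1|)
          (|t5 ^ 3 * t6 ^ 2 + t0 ^ 2 * t1 * t5 * t6|)))))

noncomputable def g0 (t0 t5 t6 : ℝ) : ℝ :=
  (volume {t1 : ℝ | h t0 t1 t5 t6 ≤ 1}).toReal

lemma Real.sqrt_sub_sqrt_le_sqrt_sub (u v : ℝ) : √v - √u ≤ √(v - u) := by
  rcases le_total v u with hvu | huv
  · linarith [Real.sqrt_le_sqrt hvu, Real.sqrt_nonneg (v - u)]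
  rcases le_total u 0 with hu | hu
  · rw [Real.sqrt_eq_zero'.mpr hu, sub_zero]
    exact Real.sqrt_le_sqrt (by linarith)
  · rw [sub_le_iff_le_add, Real.sqrt_le_left (by positivity), add_sq,
      Real.sq_sqrt (sub_nonneg.mpr huv), Real.sq_sqrt hu]
    nlinarith [mul_nonneg (Real.sqrt_nonneg (v - u)) (Real.sqrt_nonneg u)]

lemma volume_setOf_sq_mem_Icc_le (u v : ℝ) :
    volume {y : ℝ | y ^ 2 ∈ Set.Icc u v} ≤ ENNReal.ofReal (2 * √(v - u)) := by
  have hsub : {y : ℝ | y ^ 2 ∈ Set.Icc u v} ⊆ Set.Icc (-√v) (-√u) ∪ Set.Icc (√u) (√v) := by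
    rintro y ⟨huy, hyv⟩
    have hle : |y| ≤ √v := Real.abs_le_sqrt hyv
    have hge : √u ≤ |y| := Real.sqrt_sq_eq_abs y ▸ Real.sqrt_le_sqrt huy
    rcases le_total 0 y with hy | hy
    · rw [abs_of_nonneg hy] at hle hge
      exact Or.inr ⟨hge, hle⟩
    · rw [abs_of_nonpos hy] at hle hge
      exact Or.inl ⟨by linarith, by linarith⟩
  calc volume {y : ℝ | y ^ 2 ∈ Set.Icc u v}
      ≤ volume (Set.Icc (-√v) (-√u)) + volume (Set.Icc (√u) (√v)) :=
        (measure_mono hsub).trans (measure_union_le _ _)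
    _ = ENNReal.ofReal (√v - √u) + ENNReal.ofReal (√v - √u) := by
        rw [Real.volume_Icc, Real.volume_Icc, neg_sub_neg]
    _ ≤ ENNReal.ofReal (√(v - u)) + ENNReal.ofReal (√(v - u)) := by
        gcongr <;> exact Real.sqrt_sub_sqrt_le_sqrt_sub u v
    _ = ENNReal.ofReal (2 * √(v - u)) := by
        rw [← ENNReal.ofReal_add (Real.sqrt_nonneg _) (Real.sqrt_nonneg _), two_mul]

lemma volume_setOf_abs_quadratic_le_one_le (a b : ℝ) (ha : a ≠ 0) :
    volume {x : ℝ | |a * x ^ 2 + b * x| ≤ 1} ≤ ENNReal.ofReal (2 * √(2 / |a|)) := by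
  set r := b / (2 * a)
  have hsub : {x : ℝ | |a * x ^ 2 + b * x| ≤ 1} ⊆
      (· + r) ⁻¹' {y | y ^ 2 ∈ Set.Icc (r ^ 2 - 1 / |a|) (r ^ 2 + 1 / |a|)} := by
    intro x (hx : |a * x ^ 2 + b * x| ≤ 1)
    have hsq : a * x ^ 2 + b * x = a * ((x + r) ^ 2 - r ^ 2) := by
      simp only [r]; field_simp; ring
    rw [hsq, abs_mul, ← le_div_iff₀' (abs_pos.mpr ha), abs_le] at hx
    exact ⟨by linarith [hx.1], by linarith [hx.2]⟩
  calc volume {x : ℝ | |a * x ^ 2 + b * x| ≤ 1}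
      ≤ volume {y : ℝ | y ^ 2 ∈ Set.Icc (r ^ 2 - 1 / |a|) (r ^ 2 + 1 / |a|)} :=
        (measure_mono hsub).trans_eq (measure_preimage_add_right _ _ _)
    _ ≤ ENNReal.ofReal (2 * √(2 / |a|)) := by
        convert volume_setOf_sq_mem_Icc_le _ _ using 4
        ring

lemma setOf_h_le_one_subset (t0 t5 t6 : ℝ) :
    {t1 : ℝ | h t0 t1 t5 t6 ≤ 1} ⊆
      {x : ℝ | |(t0 ^ 2 * t6) * x ^ 2 + (t5 ^ 2 * t6 ^ 2) * x| ≤ 1} := by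
  intro x (hx : h t0 x t5 t6 ≤ 1)
  have hterm : |x * t5 ^ 2 * t6 ^ 2 + t0 ^ 2 * x ^ 2 * t6| ≤ 1 :=
    (le_max_left _ _).trans <| (le_max_right _ _).trans <| (le_max_right _ _).trans hx
  show |_| ≤ (1 : ℝ)
  convert hterm using 2
  ring

theorem g0_bound :
    ∃ C : ℝ, 0 < C ∧ ∀ t0 t5 t6 : ℝ, 0 < t0 → t5 ≠ 0 → t6 ≠ 0 →
      g0 t0 t5 t6 ≤ C / (t0 * |t6| ^ ((1 : ℝ) / 2)) := by
  refine ⟨2 * √2, by positivity, fun t0 t5 t6 ht0 _ ht6 => ?_⟩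
  have ha : t0 ^ 2 * t6 ≠ 0 := by positivity
  have hvol := (measure_mono (setOf_h_le_one_subset t0 t5 t6)).trans
    (volume_setOf_abs_quadratic_le_one_le _ (t5 ^ 2 * t6 ^ 2) ha)
  have hscale : 2 * √(2 / |t0 ^ 2 * t6|) = 2 * √2 / (t0 * |t6| ^ ((1 : ℝ) / 2)) := by
    rw [← Real.sqrt_eq_rpow, abs_mul, abs_of_pos (by positivity : 0 < t0 ^ 2),
      Real.sqrt_div' _ (by positivity), Real.sqrt_mul (sq_nonneg t0),
      Real.sqrt_sq ht0.le, mul_div_assoc]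
  exact hscale ▸ ENNReal.toReal_le_of_le_ofReal (by positivity) hvol
end

section
/- Let x = (x0,...,x5) ∈ ℤ⁶ be given by x0 = e1²e2²e3³e4²e5, x1 = e1²e2e3²e4a1, x2 = e6a1a2, x3 = e1e3e4e5e6a1, x4 = e1e2²e3²e4a2, x5 = e2e3e4e5e6a2, where e1,...,e6,a1,a2 are integers satisfying e4e5²e6 + e1a1 + e2a2 = 0. Then x satisfies all five equations: x0x2 − x1x5 = 0, x0x2 − x3x4 = 0, x0x3 + x1² + x1x4 = 0, x0x5 + x1x4 + x4² = 0, x3x5 + x1x2 + x2x4 = 0. -/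
theorem parametrization_satisfies_quadrics
    (e1 e2 e3 e4 e5 e6 a1 a2 : ℤ)
    (htorsor : e4 * e5 ^ 2 * e6 + e1 * a1 + e2 * a2 = 0) :
    let x0 := e1 ^ 2 * e2 ^ 2 * e3 ^ 3 * e4 ^ 2 * e5
    let x1 := e1 ^ 2 * e2 * e3 ^ 2 * e4 * a1
    let x2 := e6 * a1 * a2
    let x3 := e1 * e3 * e4 * e5 * e6 * a1
    let x4 := e1 * e2 ^ 2 * e3 ^ 2 * e4 * a2
    let x5 := e2 * e3 * e4 * e5 * e6 * a2
    x0 * x2 - x1 * x5 = 0 ∧ x0 * x2 - x3 * x4 = 0 ∧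
    x0 * x3 + x1 ^ 2 + x1 * x4 = 0 ∧ x0 * x5 + x1 * x4 + x4 ^ 2 = 0 ∧
    x3 * x5 + x1 * x2 + x2 * x4 = 0 := by
  refine ⟨by ring, by ring, ?_, ?_, ?_⟩
  · linear_combination (e1^3*e2^2*e3^4*e4^2*a1) * htorsor
  · linear_combination (e1^2*e2^3*e3^4*e4^2*a2) * htorsor
  · linear_combination (e1*e2*e3^2*e4*e6*a1*a2) * htorsor
end

section
/- Suppose integers e1,...,e6, a1, a2 satisfy e4e5²e6 + e1a1 + e2a2 = 0 and the six coordinates x0 = e1²e2²e3³e4²e5, x1 = e1²e2e3²e4a1, x2 = e6a1a2, x3 = e1e3e4e5e6a1, x4 = e1e2²e3²e4a2, x5 = e2e3e4e5e6a2 all have absolute value at most B (with B ≥ 1). Then |e1e2e3²e4²e5²e6| ≤ 2B and |e3e4²e5³e6²| ≤ 2B. -/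
theorem abs_le_two_mul_of_add_add_eq_zero {R : Type*} [Ring R] [LinearOrder R] [IsOrderedRing R]
    {x p q B : R} (h : x + p + q = 0) (hp : |p| ≤ B) (hq : |q| ≤ B) : |x| ≤ 2 * B := by
  rw [eq_neg_of_add_eq_zero_left ((add_assoc x p q).symm.trans h), abs_neg, two_mul]
  exact (abs_add_le p q).trans (add_le_add hp hq)

theorem further_height_conditions_general
    (e1 e2 e3 e4 e5 e6 a1 a2 B : ℤ)
    (htorsor : e4 * e5 ^ 2 * e6 + e1 * a1 + e2 * a2 = 0)
    (hx1 : |e1 ^ 2 * e2 * e3 ^ 2 * e4 * a1| ≤ B)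
    (hx3 : |e1 * e3 * e4 * e5 * e6 * a1| ≤ B)
    (hx4 : |e1 * e2 ^ 2 * e3 ^ 2 * e4 * a2| ≤ B)
    (hx5 : |e2 * e3 * e4 * e5 * e6 * a2| ≤ B) :
    |e1 * e2 * e3 ^ 2 * e4 ^ 2 * e5 ^ 2 * e6| ≤ 2 * B ∧
    |e3 * e4 ^ 2 * e5 ^ 3 * e6 ^ 2| ≤ 2 * B :=
  ⟨abs_le_two_mul_of_add_add_eq_zero
      (by linear_combination (e1 * e2 * e3 ^ 2 * e4) * htorsor) hx1 hx4,
    abs_le_two_mul_of_add_add_eq_zero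
      (by linear_combination (e3 * e4 * e5 * e6) * htorsor) hx3 hx5⟩

theorem further_height_conditions
    (e1 e2 e3 e4 e5 e6 a1 a2 B : ℤ)
    (h1 : 0 < e1) (h2 : 0 < e2) (h3 : 0 < e3) (h4 : 0 < e4) (h5 : 0 < e5)
    (h6 : e6 ≠ 0) (hB : 1 ≤ B)
    (htorsor : e4 * e5 ^ 2 * e6 + e1 * a1 + e2 * a2 = 0)
    (hx0 : |e1 ^ 2 * e2 ^ 2 * e3 ^ 3 * e4 ^ 2 * e5| ≤ B)
    (hx1 : |e1 ^ 2 * e2 * e3 ^ 2 * e4 * a1| ≤ B)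
    (hx2 : |e6 * a1 * a2| ≤ B)
    (hx3 : |e1 * e3 * e4 * e5 * e6 * a1| ≤ B)
    (hx4 : |e1 * e2 ^ 2 * e3 ^ 2 * e4 * a2| ≤ B)
    (hx5 : |e2 * e3 * e4 * e5 * e6 * a2| ≤ B) :
    |e1 * e2 * e3 ^ 2 * e4 ^ 2 * e5 ^ 2 * e6| ≤ 2 * B ∧
    |e3 * e4 ^ 2 * e5 ^ 3 * e6 ^ 2| ≤ 2 * B :=
  further_height_conditions_general e1 e2 e3 e4 e5 e6 a1 a2 B htorsor hx1 hx3 hx4 hx5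
end
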